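/- arXiv:1312.2989 — 4 statements merged into one kernel-verified Lean document; each statement's English description precedes it below -/
import Mathlib

section
/- Let H be a complex Hilbert space, let u, w ∈ H be such that the inner product ⟪w, u⟫ is real (i.e. its imaginary part vanishes), let j ∈ ℤ and let τ ∈ ℝ with |τ| ≥ 1. Then ‖(((j + 1/2)^2 − τ^2) + 2τ(j + 1/2)·i) • u + w‖ ≥ |τ| · ‖u‖, where the scalar (((j + 1/2)^2 − τ^2) + 2τ(j + 1/2)·i) is a complex number acting on u by scalar multiplication. -/
theorem stmt_0 {H : Type*} [NormedAddCommGroup H] [InnerProductSpace ℂ H]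
    (u w : H) (hwu : (inner ℂ w u : ℂ).im = 0) (j : ℤ) (τ : ℝ) (hτ : 1 ≤ |τ|) :
    |τ| * ‖u‖ ≤
      ‖(((((j : ℂ) + 1 / 2) ^ 2 - (τ : ℂ) ^ 2) +
          2 * (τ : ℂ) * ((j : ℂ) + 1 / 2) * Complex.I) • u + w)‖ := by
  set a : ℝ := (j : ℝ) + 1 / 2 with ha
  set lam : ℂ := ((((j : ℂ) + 1 / 2) ^ 2 - (τ : ℂ) ^ 2) +
          2 * (τ : ℂ) * ((j : ℂ) + 1 / 2) * Complex.I) with hlam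
  have hlam' : lam = ((a ^ 2 - τ ^ 2 : ℝ) : ℂ) + ((2 * τ * a : ℝ) : ℂ) * Complex.I := by
    rw [hlam, ha]; push_cast; ring
  have hre : lam.re = a ^ 2 - τ ^ 2 := by
    simp only [hlam', Complex.add_re, Complex.mul_re, Complex.ofReal_re, Complex.ofReal_im,
      Complex.I_re, Complex.I_im]; ring
  have him : lam.im = 2 * τ * a := by
    simp only [hlam', Complex.add_im, Complex.mul_im, Complex.ofReal_re, Complex.ofReal_im,
      Complex.I_re, Complex.I_im]; ring
  set r : ℝ := (inner ℂ u w : ℂ).re with hr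
  have hzim : (inner ℂ u w : ℂ).im = 0 := by
    rw [← inner_conj_symm u w, Complex.conj_im, hwu, neg_zero]
  have hCS : |r| ≤ ‖u‖ * ‖w‖ :=
    calc |r| ≤ ‖(inner ℂ u w : ℂ)‖ := by
          simpa using Complex.abs_re_le_norm (inner ℂ u w)
      _ ≤ ‖u‖ * ‖w‖ := norm_inner_le_norm u w
  have hnl : ‖lam‖ ^ 2 = (a ^ 2 + τ ^ 2) ^ 2 := by
    rw [Complex.sq_norm, Complex.normSq_apply, hre, him]; ring
  have key : ‖lam • u + w‖ ^ 2 =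
      (a ^ 2 + τ ^ 2) ^ 2 * ‖u‖ ^ 2 + 2 * (a ^ 2 - τ ^ 2) * r + ‖w‖ ^ 2 := by
    rw [@norm_add_sq ℂ, inner_smul_left, norm_smul]
    simp only [RCLike.re_to_complex, Complex.mul_re, Complex.conj_re, Complex.conj_im, hzim, hre, him, ← hr]
    rw [mul_pow, hnl]
    ring
  have ha2 : (1:ℝ) / 4 ≤ a ^ 2 := by
    have h1 : (1:ℝ) ≤ |2 * (j:ℝ) + 1| := by
      have h0 : (2 * j + 1 : ℤ) ≠ 0 := by omega
      have h2 := Int.one_le_abs h0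
      calc (1:ℝ) ≤ |((2 * j + 1 : ℤ) : ℝ)| := by
            rw [← Int.cast_abs]; exact_mod_cast h2
        _ = |2 * (j:ℝ) + 1| := by push_cast; ring_nf
    have h2 := mul_self_le_mul_self (by norm_num : (0:ℝ) ≤ 1) h1
    rw [ha]
    nlinarith [sq_abs (2 * (j:ℝ) + 1)]
  clear_value a r
  have hfin : τ ^ 2 * ‖u‖ ^ 2 ≤ 4 * a ^ 2 * τ ^ 2 * ‖u‖ ^ 2 := by
    have h3 := mul_le_mul_of_nonneg_right ha2 (mul_nonneg (sq_nonneg τ) (sq_nonneg ‖u‖))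
    nlinarith [h3]
  have hx : -(|a ^ 2 - τ ^ 2| * |r|) ≤ (a ^ 2 - τ ^ 2) * r := by
    rw [← abs_mul]; exact neg_abs_le _
  have hprod : |a ^ 2 - τ ^ 2| * |r| ≤ |a ^ 2 - τ ^ 2| * (‖u‖ * ‖w‖) :=
    mul_le_mul_of_nonneg_left hCS (abs_nonneg _)
  have hsq : (|τ| * ‖u‖) ^ 2 ≤ ‖lam • u + w‖ ^ 2 := by
    rw [mul_pow, sq_abs, key]
    nlinarith [hx, hprod, sq_nonneg (|a ^ 2 - τ ^ 2| * ‖u‖ - ‖w‖),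
      sq_abs (a ^ 2 - τ ^ 2), hfin]
  exact le_of_pow_le_pow_left₀ two_ne_zero (norm_nonneg _) hsq
end

section
/- There exists a constant C > 0 such that for all τ ∈ ℝ with |τ| ≥ 1, the series ∑_{m=0}^{∞} (1 + m) / ((m² − τ²)² + τ²) converges and its sum is at most C / |τ|. -/
set_option maxHeartbeats 1000000

noncomputable def S0 : ℝ := ∑' j : ℕ, 1 / ((j : ℝ) ^ 2 + 1)

lemma S0_summable : Summable (fun j : ℕ => 1 / ((j : ℝ) ^ 2 + 1)) := by
  have h2 : Summable (fun j : ℕ => 2 * (1 / ((j : ℝ) + 1) ^ 2)) := by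
    apply Summable.mul_left
    exact_mod_cast (summable_nat_add_iff 1).2 (Real.summable_one_div_nat_pow.2 one_lt_two)
  apply Summable.of_nonneg_of_le (fun j => by positivity) (fun j => ?_) h2
  rw [mul_one_div, div_le_div_iff₀ (by positivity) (by positivity)]
  nlinarith [sq_nonneg ((j:ℝ) - 1)]

lemma S0_pos : 0 < S0 := by
  have h0 := Summable.le_tsum S0_summable 0 (fun j _ => by positivity)
  unfold S0
  refine lt_of_lt_of_le ?_ h0
  norm_num

lemma hsum (t : ℝ) : Summable (fun m : ℕ => 1 / (((m : ℝ) - t) ^ 2 + 1)) := by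
  apply Summable.of_nonneg_of_le (fun m => by positivity) (fun m => ?_)
    (S0_summable.mul_left (2 * t ^ 2 + 3))
  have h1 : 0 < ((m : ℝ) - t) ^ 2 + 1 := by positivity
  have h2 : 0 < (m : ℝ) ^ 2 + 1 := by positivity
  rw [mul_one_div, div_le_div_iff₀ h1 h2]
  nlinarith [sq_nonneg ((m:ℝ) - 2*t), mul_nonneg (sq_nonneg t) (sq_nonneg ((m:ℝ) - t))]

lemma sumbound (t : ℝ) (ht : 1 ≤ t) :
    ∑' m : ℕ, 1 / (((m : ℝ) - t) ^ 2 + 1) ≤ 2 * S0 := by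
  obtain ⟨n, hn1, hn2⟩ : ∃ n : ℕ, (n : ℝ) ≤ t ∧ t < (n : ℝ) + 1 :=
    ⟨⌊t⌋₊, Nat.floor_le (by linarith), Nat.lt_floor_add_one t⟩
  rw [← Summable.sum_add_tsum_nat_add (n + 1) (hsum t)]
  have hfin : ∑ m ∈ Finset.range (n + 1), 1 / (((m : ℝ) - t) ^ 2 + 1) ≤ S0 := by
    have hrefl : ∑ m ∈ Finset.range (n + 1), 1 / (((n - m : ℕ) : ℝ) ^ 2 + 1)
        = ∑ j ∈ Finset.range (n + 1), 1 / ((j : ℝ) ^ 2 + 1) := by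
      have h := Finset.sum_range_reflect (fun j => 1 / ((j : ℝ) ^ 2 + 1)) (n + 1)
      simpa using h
    calc ∑ m ∈ Finset.range (n + 1), 1 / (((m : ℝ) - t) ^ 2 + 1)
        ≤ ∑ m ∈ Finset.range (n + 1), 1 / (((n - m : ℕ) : ℝ) ^ 2 + 1) := by
          apply Finset.sum_le_sum
          intro m hm
          simp only [Finset.mem_range] at hm
          have hmn : m ≤ n := by omega
          have hc : ((n - m : ℕ) : ℝ) = (n : ℝ) - m := by
            push_cast [Nat.cast_sub hmn]; ring
          apply one_div_le_one_div_of_le (by positivity)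
          rw [hc]
          have h1 : (m : ℝ) ≤ (n : ℝ) := by exact_mod_cast hmn
          nlinarith
      _ = ∑ j ∈ Finset.range (n + 1), 1 / ((j : ℝ) ^ 2 + 1) := hrefl
      _ ≤ S0 := Summable.sum_le_tsum _ (fun j _ => by positivity) S0_summable
  have htail : ∑' m : ℕ, 1 / (((((m + (n + 1) : ℕ)) : ℝ) - t) ^ 2 + 1) ≤ S0 := by
    unfold S0
    refine Summable.tsum_le_tsum (fun m => ?_) ((summable_nat_add_iff (n + 1)).2 (hsum t)) S0_summable
    apply one_div_le_one_div_of_le (by positivity)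
    have hc : (((m + (n + 1) : ℕ)) : ℝ) = (m : ℝ) + n + 1 := by push_cast; ring
    rw [hc]
    nlinarith [Nat.cast_nonneg (α := ℝ) m]
  linarith

lemma key (t : ℝ) (ht : 1 ≤ t) (m : ℕ) :
    (1 + (m : ℝ)) / (((m : ℝ) ^ 2 - t ^ 2) ^ 2 + t ^ 2)
      ≤ 3 / t * (1 / (((m : ℝ) - t) ^ 2 + 1)) := by
  have ht0 : 0 < t := by linarith
  have hm : 0 ≤ (m : ℝ) := Nat.cast_nonneg m
  have hd1 : 0 < ((m : ℝ) ^ 2 - t ^ 2) ^ 2 + t ^ 2 := by positivity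
  have hd2 : 0 < t * (((m : ℝ) - t) ^ 2 + 1) := by positivity
  have heq : 3 / t * (1 / (((m : ℝ) - t) ^ 2 + 1)) = 3 / (t * (((m : ℝ) - t) ^ 2 + 1)) := by
    field_simp
  rw [heq, div_le_div_iff₀ hd1 hd2]
  rcases le_or_gt (m : ℝ) (2 * t) with h | h
  · have h1 : (1 : ℝ) + m ≤ 3 * t := by linarith
    have h2 : t ^ 2 * ((m : ℝ) - t) ^ 2 ≤ ((m : ℝ) ^ 2 - t ^ 2) ^ 2 := by
      nlinarith [mul_nonneg (sq_nonneg ((m:ℝ) - t)) (mul_nonneg hm (by linarith : (0:ℝ) ≤ (m:ℝ) + 2 * t))]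
    nlinarith [sq_nonneg ((m:ℝ) - t), mul_le_mul_of_nonneg_right h1
      (by positivity : (0:ℝ) ≤ t * (((m:ℝ) - t) ^ 2 + 1))]
  · have hm2 : (2 : ℝ) ≤ m := by linarith
    have h4 : (1 : ℝ) ≤ (m : ℝ) - t := by linarith
    have e1 : ((m : ℝ) - t) ^ 2 + 1 ≤ 2 * ((m : ℝ) - t) ^ 2 := by nlinarith
    have e2 : t * (1 + (m : ℝ)) ≤ (m : ℝ) ^ 2 := by nlinarith
    have e3 : (m : ℝ) ^ 2 * ((m : ℝ) - t) ^ 2 ≤ ((m : ℝ) ^ 2 - t ^ 2) ^ 2 := by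
      nlinarith [mul_nonneg (sq_nonneg ((m:ℝ) - t)) (by positivity : (0:ℝ) ≤ 2 * m * t + t ^ 2)]
    nlinarith [mul_le_mul e2 e1 (by positivity) (by positivity), sq_nonneg t]

theorem stmt_6 :
    ∃ C : ℝ, 0 < C ∧ ∀ τ : ℝ, 1 ≤ |τ| →
      Summable (fun m : ℕ => (1 + (m : ℝ)) / (((m : ℝ) ^ 2 - τ ^ 2) ^ 2 + τ ^ 2)) ∧
      ∑' m : ℕ, (1 + (m : ℝ)) / (((m : ℝ) ^ 2 - τ ^ 2) ^ 2 + τ ^ 2) ≤ C / |τ| := by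
  refine ⟨6 * S0, by linarith [S0_pos], fun τ hτ => ?_⟩
  set t := |τ| with htdef
  have ht : 1 ≤ t := hτ
  have ht0 : 0 < t := by linarith
  have hτ2 : τ ^ 2 = t ^ 2 := (sq_abs τ).symm
  rw [hτ2]
  have hS : Summable (fun m : ℕ => (1 + (m : ℝ)) / (((m : ℝ) ^ 2 - t ^ 2) ^ 2 + t ^ 2)) := by
    apply Summable.of_nonneg_of_le (fun m => by positivity) (fun m => key t ht m)
      ((hsum t).mul_left (3 / t))
  refine ⟨hS, ?_⟩
  calc ∑' m : ℕ, (1 + (m : ℝ)) / (((m : ℝ) ^ 2 - t ^ 2) ^ 2 + t ^ 2)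
      ≤ ∑' m : ℕ, 3 / t * (1 / (((m : ℝ) - t) ^ 2 + 1)) :=
        Summable.tsum_le_tsum (fun m => key t ht m) hS ((hsum t).mul_left (3 / t))
    _ = 3 / t * ∑' m : ℕ, 1 / (((m : ℝ) - t) ^ 2 + 1) := tsum_mul_left
    _ ≤ 3 / t * (2 * S0) := by
        apply mul_le_mul_of_nonneg_left (sumbound t ht) (by positivity)
    _ = 6 * S0 / t := by ring
end

section
/- There exists a constant C > 0 such that for every integer ν ≥ 1 and every τ ∈ ℝ with |τ| ≥ 1, the series ∑_{m=0}^{∞} (1 + m) / ((m² − τ²)² + 4^{ν−1} τ²) converges and 2^ν |τ| · ∑_{m=0}^{∞} (1 + m) / ((m² − τ²)² + 4^{ν−1} τ²) ≤ C. -/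
open Real Finset

/-- Mean value bound for arctan on the negative side: for `a < b ≤ 0`,
`arctan b - arctan a ≥ (b - a)/(1 + a^2)`. -/
lemma arctan_sub_ge_left {a b : ℝ} (hab : a < b) (hb : b ≤ 0) :
    (b - a) / (1 + a ^ 2) ≤ Real.arctan b - Real.arctan a := by
  obtain ⟨c, hc, hceq⟩ := exists_hasDerivAt_eq_slope Real.arctan (fun x => 1 / (1 + x ^ 2))
    hab Real.continuous_arctan.continuousOn (fun x _ => Real.hasDerivAt_arctan x)
  have hc2 : c ^ 2 ≤ a ^ 2 := by nlinarith [hc.1, hc.2]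
  have h1 : (0:ℝ) < 1 + c ^ 2 := by positivity
  have hba : (0:ℝ) < b - a := by linarith
  have h3 : Real.arctan b - Real.arctan a = (b - a) / (1 + c ^ 2) := by
    field_simp [h1.ne', hba.ne'] at hceq
    rw [eq_comm, div_eq_iff h1.ne']
    linear_combination hceq
  rw [h3]
  exact div_le_div_of_nonneg_left hba.le h1 (by linarith)

/-- Mean value bound for arctan on the positive side: for `0 ≤ a < b`,
`arctan b - arctan a ≥ (b - a)/(1 + b^2)`. -/
lemma arctan_sub_ge_right {a b : ℝ} (hab : a < b) (ha : 0 ≤ a) :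
    (b - a) / (1 + b ^ 2) ≤ Real.arctan b - Real.arctan a := by
  obtain ⟨c, hc, hceq⟩ := exists_hasDerivAt_eq_slope Real.arctan (fun x => 1 / (1 + x ^ 2))
    hab Real.continuous_arctan.continuousOn (fun x _ => Real.hasDerivAt_arctan x)
  have hc2 : c ^ 2 ≤ b ^ 2 := by nlinarith [hc.1, hc.2]
  have h1 : (0:ℝ) < 1 + c ^ 2 := by positivity
  have hba : (0:ℝ) < b - a := by linarith
  have h3 : Real.arctan b - Real.arctan a = (b - a) / (1 + c ^ 2) := by
    field_simp [h1.ne', hba.ne'] at hceq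
    rw [eq_comm, div_eq_iff h1.ne']
    linear_combination hceq
  rw [h3]
  exact div_le_div_of_nonneg_left hba.le h1 (by linarith)

lemma stmt9_main_aux (t ε : ℝ) (ht : 1 ≤ t) (htε : t ≤ ε) (n : ℕ) :
    ∑ m ∈ Finset.range n, (1 + (m : ℝ)) / (((m : ℝ) ^ 2 - t ^ 2) ^ 2 + ε ^ 2)
      ≤ (2 * Real.pi + 6) / ε := by
  have hε : (1:ℝ) ≤ ε := ht.trans htε
  have hε0 : (0:ℝ) < ε := lt_of_lt_of_le one_pos hε
  have ht0 : (0:ℝ) < t := lt_of_lt_of_le one_pos ht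
  set H : ℕ → ℝ := fun m => Real.arctan (((m : ℝ) ^ 2 - t ^ 2) / ε) with hHdef
  set a : ℕ := Nat.floor t with hadef
  have hD : ∀ m : ℕ, (0:ℝ) < ((m : ℝ) ^ 2 - t ^ 2) ^ 2 + ε ^ 2 := by
    intro m; positivity
  have hHmono : ∀ i j : ℕ, i ≤ j → H i ≤ H j := by
    intro i j hij
    simp only [hHdef]
    apply Real.arctan_strictMono.monotone
    have hc : ((i:ℝ)) ≤ (j:ℝ) := by exact_mod_cast hij
    have hsq : ((i:ℝ))^2 ≤ ((j:ℝ))^2 := by nlinarith [Nat.cast_nonneg (α := ℝ) i]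
    apply (div_le_div_iff_of_pos_right hε0).mpr
    linarith
  have hHub : ∀ k : ℕ, H k ≤ Real.pi / 2 := by
    intro k; simp only [hHdef]; exact (Real.arctan_lt_pi_div_two _).le
  have hHlb : ∀ k : ℕ, -(Real.pi / 2) ≤ H k := by
    intro k; simp only [hHdef]; exact (Real.neg_pi_div_two_lt_arctan _).le
  -- per-term key bound
  have key : ∀ m : ℕ,
      (1 + (m : ℝ)) / (((m : ℝ) ^ 2 - t ^ 2) ^ 2 + ε ^ 2)
        ≤ (H (m+1) - H m) / ε + (H m - H (m-1)) / ε
          + (if m = a ∨ m = a + 1 then (3:ℝ) else 0) / ε := by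
    intro m
    have hnn1 : 0 ≤ (H (m+1) - H m) / ε :=
      div_nonneg (by linarith [hHmono m (m+1) (Nat.le_succ m)]) hε0.le
    have hnn2 : 0 ≤ (H m - H (m-1)) / ε :=
      div_nonneg (by linarith [hHmono (m-1) m (Nat.sub_le m 1)]) hε0.le
    have hnn3 : 0 ≤ (if m = a ∨ m = a + 1 then (3:ℝ) else 0) / ε := by
      apply div_nonneg _ hε0.le; split <;> norm_num
    have hm0 : (0:ℝ) ≤ (m:ℝ) := Nat.cast_nonneg m
    by_cases h1 : (m : ℝ) + 1 ≤ t
    · -- left region: use H (m+1) - H m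
      have hab : ((m:ℝ)^2 - t^2)/ε < (((m:ℝ)+1)^2 - t^2)/ε := by
        apply (div_lt_div_iff_of_pos_right hε0).mpr; nlinarith
      have hb : (((m:ℝ)+1)^2 - t^2)/ε ≤ 0 := by
        apply div_nonpos_of_nonpos_of_nonneg _ hε0.le; nlinarith
      have harc := arctan_sub_ge_left hab hb
      have hH1 : H (m+1) - H m
          = Real.arctan ((((m:ℝ)+1)^2 - t^2)/ε) - Real.arctan (((m:ℝ)^2 - t^2)/ε) := by
        simp only [hHdef]; push_cast; ring_nf
      have heq : ((((m:ℝ)+1)^2 - t^2)/ε - ((m:ℝ)^2 - t^2)/ε)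
            / (1 + (((m:ℝ)^2 - t^2)/ε)^2) / ε
          = (2*(m:ℝ)+1) / (((m : ℝ) ^ 2 - t ^ 2) ^ 2 + ε ^ 2) := by
        rw [div_eq_div_iff (by positivity) (hD m).ne']
        field_simp
        ring
      have hstep : (1 + (m : ℝ)) / (((m : ℝ) ^ 2 - t ^ 2) ^ 2 + ε ^ 2)
          ≤ (H (m+1) - H m) / ε := by
        calc (1 + (m : ℝ)) / (((m : ℝ) ^ 2 - t ^ 2) ^ 2 + ε ^ 2)
            ≤ (2*(m:ℝ)+1) / (((m : ℝ) ^ 2 - t ^ 2) ^ 2 + ε ^ 2) := by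
              apply (div_le_div_iff_of_pos_right (hD m)).mpr; linarith
          _ = ((((m:ℝ)+1)^2 - t^2)/ε - ((m:ℝ)^2 - t^2)/ε)
                / (1 + (((m:ℝ)^2 - t^2)/ε)^2) / ε := heq.symm
          _ ≤ (H (m+1) - H m) / ε := by
              rw [hH1]
              apply (div_le_div_iff_of_pos_right hε0).mpr
              exact harc
      linarith
    · by_cases h2 : t + 1 ≤ (m:ℝ)
      · -- right region: use H m - H (m-1)
        have hm2 : 2 ≤ m := by
          have : (2:ℝ) ≤ (m:ℝ) := by linarith
          exact_mod_cast this
        have hm1cast : ((m-1:ℕ):ℝ) = (m:ℝ) - 1 := by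
          rw [Nat.cast_sub (by omega)]; norm_num
        have ha' : 0 ≤ (((m:ℝ)-1)^2 - t^2)/ε := by
          apply div_nonneg _ hε0.le; nlinarith
        have hab : (((m:ℝ)-1)^2 - t^2)/ε < ((m:ℝ)^2 - t^2)/ε := by
          apply (div_lt_div_iff_of_pos_right hε0).mpr; nlinarith
        have harc := arctan_sub_ge_right hab ha'
        have hH1 : H m - H (m-1)
            = Real.arctan (((m:ℝ)^2 - t^2)/ε) - Real.arctan ((((m:ℝ)-1)^2 - t^2)/ε) := by
          simp only [hHdef, hm1cast]
        have heq : (((m:ℝ)^2 - t^2)/ε - (((m:ℝ)-1)^2 - t^2)/ε)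
              / (1 + (((m:ℝ)^2 - t^2)/ε)^2) / ε
            = (2*(m:ℝ)-1) / (((m : ℝ) ^ 2 - t ^ 2) ^ 2 + ε ^ 2) := by
          rw [div_eq_div_iff (by positivity) (hD m).ne']
          field_simp
          ring
        have hstep : (1 + (m : ℝ)) / (((m : ℝ) ^ 2 - t ^ 2) ^ 2 + ε ^ 2)
            ≤ (H m - H (m-1)) / ε := by
          calc (1 + (m : ℝ)) / (((m : ℝ) ^ 2 - t ^ 2) ^ 2 + ε ^ 2)
              ≤ (2*(m:ℝ)-1) / (((m : ℝ) ^ 2 - t ^ 2) ^ 2 + ε ^ 2) := by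
                apply (div_le_div_iff_of_pos_right (hD m)).mpr
                have : (2:ℝ) ≤ (m:ℝ) := by exact_mod_cast hm2
                linarith
            _ = (((m:ℝ)^2 - t^2)/ε - (((m:ℝ)-1)^2 - t^2)/ε)
                  / (1 + (((m:ℝ)^2 - t^2)/ε)^2) / ε := heq.symm
            _ ≤ (H m - H (m-1)) / ε := by
                rw [hH1]
                apply (div_le_div_iff_of_pos_right hε0).mpr
                exact harc
        linarith
      · -- middle region
        push_neg at h1 h2
        have haℝ : (a:ℝ) ≤ t := Nat.floor_le ht0.le
        have haℝ' : t < (a:ℝ) + 1 := Nat.lt_floor_add_one t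
        have hcond : m = a ∨ m = a + 1 := by
          have h3 : (a:ℝ) < (m:ℝ) + 1 := by linarith
          have h4 : (m:ℝ) < (a:ℝ) + 2 := by linarith
          have h3' : a < m + 1 := by exact_mod_cast h3
          have h4' : m < a + 2 := by exact_mod_cast h4
          omega
        rw [if_pos hcond]
        have hstep : (1 + (m : ℝ)) / (((m : ℝ) ^ 2 - t ^ 2) ^ 2 + ε ^ 2) ≤ 3 / ε := by
          rw [div_le_div_iff₀ (hD m) hε0]
          nlinarith [sq_nonneg ((m:ℝ)^2 - t^2),
            mul_le_mul_of_nonneg_right htε hε0.le,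
            mul_le_mul_of_nonneg_right (show (1:ℝ)+(m:ℝ) ≤ 3*t by linarith) hε0.le]
        linarith
  calc ∑ m ∈ Finset.range n, (1 + (m : ℝ)) / (((m : ℝ) ^ 2 - t ^ 2) ^ 2 + ε ^ 2)
      ≤ ∑ m ∈ Finset.range n, ((H (m+1) - H m) / ε + (H m - H (m-1)) / ε
          + (if m = a ∨ m = a + 1 then (3:ℝ) else 0) / ε) :=
        Finset.sum_le_sum fun m _ => key m
    _ ≤ (2 * Real.pi + 6) / ε := by
        rw [Finset.sum_add_distrib, Finset.sum_add_distrib]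
        have e1 : ∑ m ∈ Finset.range n, (H (m+1) - H m) / ε = H n / ε - H 0 / ε := by
          simp only [sub_div]
          exact Finset.sum_range_sub (fun m => H m / ε) n
        have e2 : ∑ m ∈ Finset.range n, (H m - H (m-1)) / ε
            = H (n-1) / ε - H 0 / ε := by
          simp only [sub_div]
          have h := Finset.sum_range_sub (fun m => H (m-1) / ε) n
          simpa using h
        have e3 : ∑ m ∈ Finset.range n, (if m = a ∨ m = a + 1 then (3:ℝ) else 0) ≤ 6 := by
          have hle : ∀ m ∈ Finset.range n, (if m = a ∨ m = a + 1 then (3:ℝ) else 0)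
              ≤ (if m = a then (3:ℝ) else 0) + (if m = a + 1 then (3:ℝ) else 0) := by
            intro m _
            by_cases h : m = a <;> by_cases h' : m = a + 1 <;> simp [h, h'] <;> norm_num
          calc ∑ m ∈ Finset.range n, (if m = a ∨ m = a + 1 then (3:ℝ) else 0)
              ≤ ∑ m ∈ Finset.range n, ((if m = a then (3:ℝ) else 0)
                  + (if m = a + 1 then (3:ℝ) else 0)) := Finset.sum_le_sum hle
            _ = (if a ∈ Finset.range n then (3:ℝ) else 0)
                  + (if a + 1 ∈ Finset.range n then (3:ℝ) else 0) := by
                rw [Finset.sum_add_distrib, Finset.sum_ite_eq' (Finset.range n) a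
                  (fun _ => (3:ℝ)), Finset.sum_ite_eq' (Finset.range n) (a+1)
                  (fun _ => (3:ℝ))]
            _ ≤ 6 := by split <;> split <;> norm_num
        rw [e1, e2, ← Finset.sum_div]
        have heq : H n / ε - H 0 / ε + (H (n-1) / ε - H 0 / ε)
              + (∑ m ∈ Finset.range n, (if m = a ∨ m = a + 1 then (3:ℝ) else 0)) / ε
            = (H n - H 0 + (H (n-1) - H 0)
              + ∑ m ∈ Finset.range n, (if m = a ∨ m = a + 1 then (3:ℝ) else 0)) / ε := by
          ring
        rw [heq]
        apply (div_le_div_iff_of_pos_right hε0).mpr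
        have := hHub n; have := hHub (n-1); have := hHlb 0
        linarith

theorem stmt_9 :
    ∃ C : ℝ, 0 < C ∧ ∀ ν : ℕ, 1 ≤ ν → ∀ τ : ℝ, 1 ≤ |τ| →
      Summable (fun m : ℕ =>
        (1 + (m : ℝ)) / (((m : ℝ) ^ 2 - τ ^ 2) ^ 2 + 4 ^ (ν - 1) * τ ^ 2)) ∧
      2 ^ ν * |τ| *
        ∑' m : ℕ, (1 + (m : ℝ)) / (((m : ℝ) ^ 2 - τ ^ 2) ^ 2 + 4 ^ (ν - 1) * τ ^ 2)
        ≤ C := by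
  refine ⟨30, by norm_num, fun ν hν τ hτ => ?_⟩
  set t : ℝ := |τ| with htdef
  set ε : ℝ := 2 ^ (ν - 1) * t with hεdef
  have ht : (1:ℝ) ≤ t := hτ
  have htε : t ≤ ε := by
    have h2 : (1:ℝ) ≤ 2 ^ (ν - 1) := one_le_pow₀ (by norm_num)
    nlinarith [ht]
  have hε0 : (0:ℝ) < ε := lt_of_lt_of_le one_pos (ht.trans htε)
  have hre : ∀ m : ℕ, ((m : ℝ) ^ 2 - τ ^ 2) ^ 2 + 4 ^ (ν - 1) * τ ^ 2
      = ((m : ℝ) ^ 2 - t ^ 2) ^ 2 + ε ^ 2 := by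
    intro m
    have h1 : t ^ 2 = τ ^ 2 := sq_abs τ
    have h2 : (4:ℝ) ^ (ν - 1) = ((2:ℝ) ^ (ν - 1)) ^ 2 := by
      rw [← pow_mul, mul_comm, pow_mul]; norm_num
    rw [hεdef, mul_pow, h2, h1]
  have hfun : (fun m : ℕ => (1 + (m : ℝ)) / (((m : ℝ) ^ 2 - τ ^ 2) ^ 2 + 4 ^ (ν - 1) * τ ^ 2))
      = fun m : ℕ => (1 + (m : ℝ)) / (((m : ℝ) ^ 2 - t ^ 2) ^ 2 + ε ^ 2) := by
    funext m; rw [hre m]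
  have hnonneg : ∀ m : ℕ, 0 ≤ (1 + (m : ℝ)) / (((m : ℝ) ^ 2 - t ^ 2) ^ 2 + ε ^ 2) := by
    intro m
    apply div_nonneg (by positivity) (by positivity)
  have hbound := fun n => stmt9_main_aux t ε ht htε n
  rw [hfun]
  refine ⟨summable_of_sum_range_le hnonneg hbound, ?_⟩
  have htsum : ∑' m : ℕ, (1 + (m : ℝ)) / (((m : ℝ) ^ 2 - t ^ 2) ^ 2 + ε ^ 2)
      ≤ (2 * Real.pi + 6) / ε := Real.tsum_le_of_sum_range_le hnonneg hbound
  have h2ν : (2:ℝ) ^ ν * |τ| = 2 * ε := by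
    have hpow : (2:ℝ) ^ ν = 2 ^ (ν - 1) * 2 := by
      rw [← pow_succ]; congr 1; omega
    rw [hεdef, ← htdef, hpow]; ring
  rw [h2ν]
  have hπ : Real.pi ≤ 4 := Real.pi_le_four
  calc 2 * ε * ∑' m : ℕ, (1 + (m : ℝ)) / (((m : ℝ) ^ 2 - t ^ 2) ^ 2 + ε ^ 2)
      ≤ 2 * ε * ((2 * Real.pi + 6) / ε) := by
        apply mul_le_mul_of_nonneg_left htsum (by linarith)
    _ = 2 * (2 * Real.pi + 6) := by field_simp
    _ ≤ 30 := by linarith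
end

section
/- Let n ≥ 3, let G : ℝⁿ → Matrix (Fin n) (Fin n) ℝ be a smooth map with G(x) symmetric positive definite for every x, let c : ℝⁿ → ℝ be smooth and positive, let q : ℝⁿ → ℂ be any function, and define the Laplace–Beltrami operator Δ_G φ = (det G)^{−1/2} ∑_{j,k=1}^n ∂_{x_j}( (det G)^{1/2} (G⁻¹)_{jk} ∂_{x_k}φ ) on smooth functions φ. Then for every u ∈ C^∞(ℝⁿ; ℂ), pointwise on ℝⁿ, c^{(n+2)/4} · ( −Δ_G( c^{−(n−2)/4} u ) + q · c^{−(n−2)/4} u ) = −Δ_{c^{−1}G} u + q_c u, where c^{−1}G denotes the matrix field x ↦ c(x)^{−1} G(x) and q_c = c·q + c^{(n+2)/4} · ( −Δ_G( c^{−(n−2)/4} ) ). -/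
section aux
variable {E : Type*} [NormedAddCommGroup E] [NormedSpace ℝ E]

lemma aux_det_contDiff {m : ℕ} (M : E → Matrix (Fin m) (Fin m) ℝ)
    (h : ∀ i j, ContDiff ℝ (⊤ : ℕ∞) (fun x => M x i j)) :
    ContDiff ℝ (⊤ : ℕ∞) (fun x => (M x).det) := by
  simp only [Matrix.det_apply, Units.smul_def, zsmul_eq_mul]
  exact ContDiff.sum fun σ _ => contDiff_const.mul (contDiff_prod fun i _ => h (σ i) i)

lemma aux_inv_contDiff {m : ℕ} (M : E → Matrix (Fin m) (Fin m) ℝ)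
    (h : ∀ i j, ContDiff ℝ (⊤ : ℕ∞) (fun x => M x i j))
    (hdet : ∀ x, (M x).det ≠ 0) (i j : Fin m) :
    ContDiff ℝ (⊤ : ℕ∞) (fun x => (M x)⁻¹ i j) := by
  have hadj : ContDiff ℝ (⊤ : ℕ∞) (fun x => (M x).adjugate i j) := by
    simp only [Matrix.adjugate_apply]
    apply aux_det_contDiff
    intro a b
    by_cases hab : a = j
    · subst hab; simp only [Matrix.updateRow_self]; exact contDiff_const
    · simp only [Matrix.updateRow_ne hab]; exact h a b
  have : (fun x => (M x)⁻¹ i j) = fun x => ((M x).det)⁻¹ * (M x).adjugate i j := by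
    funext x
    rw [Matrix.inv_def, Ring.inverse_eq_inv']
    simp [Matrix.smul_apply, smul_eq_mul]
  rw [this]
  exact ((aux_det_contDiff M h).inv hdet).mul hadj

lemma aux_fderiv_mul {f g : E → ℂ} {y : E} (v : E)
    (hf : DifferentiableAt ℝ f y) (hg : DifferentiableAt ℝ g y) :
    fderiv ℝ (fun z => f z * g z) y v
      = f y * fderiv ℝ g y v + g y * fderiv ℝ f y v := by
  rw [fderiv_fun_mul hf hg]
  simp [smul_eq_mul]

lemma aux_fderiv_add {f g : E → ℂ} {y : E} (v : E)
    (hf : DifferentiableAt ℝ f y) (hg : DifferentiableAt ℝ g y) :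
    fderiv ℝ (fun z => f z + g z) y v = fderiv ℝ f y v + fderiv ℝ g y v := by
  rw [fderiv_fun_add hf hg]
  simp

end aux

/-- The Laplace–Beltrami operator associated to a matrix field `G`:
`Δ_G φ = (det G)^{-1/2} ∑_{j,k} ∂_{x_j}((det G)^{1/2} (G⁻¹)_{jk} ∂_{x_k} φ)`. -/
noncomputable def laplaceBeltrami (n : ℕ)
    (G : (Fin n → ℝ) → Matrix (Fin n) (Fin n) ℝ)
    (φ : (Fin n → ℝ) → ℂ) (x : Fin n → ℝ) : ℂ :=
  (((Real.sqrt (G x).det)⁻¹ : ℝ) : ℂ) *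
    ∑ j, ∑ k, fderiv ℝ
      (fun y => ((Real.sqrt (G y).det * ((G y)⁻¹ j k) : ℝ) : ℂ) *
        fderiv ℝ φ y (Pi.single k 1)) x (Pi.single j 1)

set_option maxHeartbeats 2000000 in
theorem stmt_18 (n : ℕ) (hn : 3 ≤ n)
    (G : (Fin n → ℝ) → Matrix (Fin n) (Fin n) ℝ)
    (hG : ∀ i j : Fin n, ContDiff ℝ (⊤ : ℕ∞) (fun x => G x i j))
    (hGsym : ∀ x, (G x).IsSymm) (hGpos : ∀ x, (G x).PosDef)
    (c : (Fin n → ℝ) → ℝ) (hc : ContDiff ℝ (⊤ : ℕ∞) c) (hcpos : ∀ x, 0 < c x)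
    (q : (Fin n → ℝ) → ℂ) (u : (Fin n → ℝ) → ℂ) (hu : ContDiff ℝ (⊤ : ℕ∞) u) :
    ∀ x : Fin n → ℝ,
      ((c x ^ (((n : ℝ) + 2) / 4) : ℝ) : ℂ) *
          (-(laplaceBeltrami n G (fun y => ((c y ^ (-((n : ℝ) - 2) / 4) : ℝ) : ℂ) * u y) x) +
            q x * (((c x ^ (-((n : ℝ) - 2) / 4) : ℝ) : ℂ) * u x)) =
        -(laplaceBeltrami n (fun y => (c y)⁻¹ • G y) u x) +
          (((c x : ℝ) : ℂ) * q x +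
            ((c x ^ (((n : ℝ) + 2) / 4) : ℝ) : ℂ) *
              (-(laplaceBeltrami n G
                  (fun y => ((c y ^ (-((n : ℝ) - 2) / 4) : ℝ) : ℂ)) x))) * u x := by
  intro x
  -- basic positivity
  have hdetpos : ∀ y, 0 < (G y).det := fun y => (hGpos y).det_pos
  have hcne : ∀ y, c y ≠ 0 := fun y => (hcpos y).ne'
  have hγpos : ∀ y, 0 < c y ^ (-((n : ℝ) - 2) / 4) := fun y => Real.rpow_pos_of_pos (hcpos y) _
  have hρpos : ∀ y, 0 < Real.sqrt (G y).det := fun y => Real.sqrt_pos.2 (hdetpos y)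
  -- smoothness
  have hdetC : ContDiff ℝ (⊤ : ℕ∞) fun y => (G y).det := aux_det_contDiff G hG
  have hρC : ContDiff ℝ (⊤ : ℕ∞) (fun y => Real.sqrt (G y).det) :=
    contDiff_iff_contDiffAt.2 fun y =>
      (Real.contDiffAt_sqrt (hdetpos y).ne').comp y hdetC.contDiffAt
  have hAC : ∀ j k : Fin n, ContDiff ℝ (⊤ : ℕ∞) fun y => (G y)⁻¹ j k :=
    fun j k => aux_inv_contDiff G hG (fun y => (hdetpos y).ne') j k
  have hγC : ContDiff ℝ (⊤ : ℕ∞) fun y => c y ^ (-((n : ℝ) - 2) / 4) :=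
    contDiff_iff_contDiffAt.2 fun y => (hc.contDiffAt).rpow_const_of_ne (hcne y)
  have hγcC : ContDiff ℝ (⊤ : ℕ∞) fun y => ((c y ^ (-((n : ℝ) - 2) / 4) : ℝ) : ℂ) :=
    Complex.ofRealCLM.contDiff.comp hγC
  have hPcC : ∀ j k : Fin n,
      ContDiff ℝ (⊤ : ℕ∞) fun y => ((Real.sqrt (G y).det * ((G y)⁻¹ j k) : ℝ) : ℂ) :=
    fun j k => Complex.ofRealCLM.contDiff.comp (hρC.mul (hAC j k))
  have hDuC : ∀ k : Fin n, ContDiff ℝ (⊤ : ℕ∞) fun y => fderiv ℝ u y (Pi.single k 1) :=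
    fun k => (hu.fderiv_right (by simp)).clm_apply contDiff_const
  have hDγC : ∀ k : Fin n, ContDiff ℝ (⊤ : ℕ∞)
      fun y => fderiv ℝ (fun z => ((c z ^ (-((n : ℝ) - 2) / 4) : ℝ) : ℂ)) y (Pi.single k 1) :=
    fun k => (hγcC.fderiv_right (by simp)).clm_apply contDiff_const
  have dd : ∀ {f : (Fin n → ℝ) → ℂ}, ContDiff ℝ (⊤ : ℕ∞) f → ∀ y, DifferentiableAt ℝ f y :=
    fun h y => h.differentiable (by simp) y
  -- symmetry of the inverse matrix
  have hsymm : ∀ (y : Fin n → ℝ) (j k : Fin n), (G y)⁻¹ j k = (G y)⁻¹ k j := by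
    intro y j k
    have h1 : ((G y)⁻¹).transpose = (G y)⁻¹ := by
      rw [Matrix.transpose_nonsing_inv, (hGsym y).eq]
    conv_lhs => rw [← h1]
    rfl
  -- inverse of the scaled matrix
  have hinv : ∀ y, ((c y)⁻¹ • G y)⁻¹ = c y • (G y)⁻¹ := by
    intro y
    haveI := invertibleOfNonzero (inv_ne_zero (hcne y))
    rw [Matrix.inv_smul (A := G y) (k := (c y)⁻¹) (isUnit_iff_ne_zero.2 (hdetpos y).ne'), invOf_eq_inv, inv_inv]
  -- sqrt of the scaled determinant
  have hsq : ∀ y, Real.sqrt (((c y)⁻¹ • G y).det)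
      = (c y ^ (-((n : ℝ) - 2) / 4) * c y ^ (-((n : ℝ) - 2) / 4)) * (c y)⁻¹
        * Real.sqrt (G y).det := by
    intro y
    rw [Matrix.det_smul, Fintype.card_fin]
    have h0 : (0:ℝ) ≤ (c y)⁻¹ ^ n := pow_nonneg (inv_nonneg.2 (hcpos y).le) n
    rw [Real.sqrt_mul h0]
    have key : Real.sqrt ((c y)⁻¹ ^ n)
        = c y ^ (-((n : ℝ) - 2) / 4) * c y ^ (-((n : ℝ) - 2) / 4) * (c y)⁻¹ := by
      have h1 : (c y)⁻¹ ^ n = c y ^ (-(n:ℝ)) := by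
        rw [inv_pow, ← Real.rpow_natCast (c y) n, ← Real.rpow_neg (hcpos y).le]
      rw [h1, Real.sqrt_eq_rpow, ← Real.rpow_mul (hcpos y).le,
        ← Real.rpow_add (hcpos y), ← Real.rpow_neg_one (c y), ← Real.rpow_add (hcpos y)]
      congr 1
      ring
    rw [key]
  -- the conformal factor power
  have hβ : c x ^ (((n : ℝ) + 2) / 4) = c x * (c x ^ (-((n : ℝ) - 2) / 4))⁻¹ := by
    rw [← Real.rpow_neg (hcpos x).le]
    nth_rewrite 2 [← Real.rpow_one (c x)]
    rw [← Real.rpow_add (hcpos x)]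
    congr 1
    ring
  -- derivative of the conformally rescaled function
  have hmulγu : ∀ (y : Fin n → ℝ) (k : Fin n),
      fderiv ℝ (fun z => ((c z ^ (-((n : ℝ) - 2) / 4) : ℝ) : ℂ) * u z) y (Pi.single k 1)
        = ((c y ^ (-((n : ℝ) - 2) / 4) : ℝ) : ℂ) * fderiv ℝ u y (Pi.single k 1)
          + u y * fderiv ℝ (fun z => ((c z ^ (-((n : ℝ) - 2) / 4) : ℝ) : ℂ)) y
              (Pi.single k 1) :=
    fun y k => aux_fderiv_mul _ (dd hγcC y) (dd hu y)
  have hAterm : ∀ j k : Fin n,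
      fderiv ℝ (fun y => ((Real.sqrt (G y).det * ((G y)⁻¹ j k) : ℝ) : ℂ) *
          fderiv ℝ (fun z => ((c z ^ (-((n : ℝ) - 2) / 4) : ℝ) : ℂ) * u z) y (Pi.single k 1))
          x (Pi.single j 1)
      = fderiv ℝ (fun y => ((Real.sqrt (G y).det * ((G y)⁻¹ j k) : ℝ) : ℂ) *
            fderiv ℝ (fun z => ((c z ^ (-((n : ℝ) - 2) / 4) : ℝ) : ℂ)) y (Pi.single k 1))
            x (Pi.single j 1) * u x
        + (((Real.sqrt (G x).det * ((G x)⁻¹ j k) : ℝ) : ℂ) *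
            fderiv ℝ (fun z => ((c z ^ (-((n : ℝ) - 2) / 4) : ℝ) : ℂ)) x (Pi.single k 1)) *
            fderiv ℝ u x (Pi.single j 1)
        + (fderiv ℝ (fun z => ((c z ^ (-((n : ℝ) - 2) / 4) : ℝ) : ℂ)) x (Pi.single j 1) *
              (((Real.sqrt (G x).det * ((G x)⁻¹ j k) : ℝ) : ℂ) *
                fderiv ℝ u x (Pi.single k 1))
          + ((c x ^ (-((n : ℝ) - 2) / 4) : ℝ) : ℂ) *
            fderiv ℝ (fun y => ((Real.sqrt (G y).det * ((G y)⁻¹ j k) : ℝ) : ℂ) *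
              fderiv ℝ u y (Pi.single k 1)) x (Pi.single j 1)) := by
    intro j k
    have e1 : (fun y => ((Real.sqrt (G y).det * ((G y)⁻¹ j k) : ℝ) : ℂ) *
          fderiv ℝ (fun z => ((c z ^ (-((n : ℝ) - 2) / 4) : ℝ) : ℂ) * u z) y (Pi.single k 1))
        = fun y => (((Real.sqrt (G y).det * ((G y)⁻¹ j k) : ℝ) : ℂ) *
              fderiv ℝ (fun z => ((c z ^ (-((n : ℝ) - 2) / 4) : ℝ) : ℂ)) y (Pi.single k 1)) *
              u y
            + ((c y ^ (-((n : ℝ) - 2) / 4) : ℝ) : ℂ) *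
              (((Real.sqrt (G y).det * ((G y)⁻¹ j k) : ℝ) : ℂ) *
                fderiv ℝ u y (Pi.single k 1)) := by
      funext y
      rw [hmulγu y k]
      ring
    rw [e1, aux_fderiv_add _
        (((dd (hPcC j k) x).fun_mul (dd (hDγC k) x)).fun_mul (dd hu x))
        ((dd hγcC x).fun_mul ((dd (hPcC j k) x).fun_mul (dd (hDuC k) x))),
      aux_fderiv_mul _ ((dd (hPcC j k) x).fun_mul (dd (hDγC k) x)) (dd hu x),
      aux_fderiv_mul _ (dd hγcC x) ((dd (hPcC j k) x).fun_mul (dd (hDuC k) x))]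
    ring
  have hDterm : ∀ j k : Fin n,
      fderiv ℝ (fun y => ((Real.sqrt (((c y)⁻¹ • G y)).det * ((((c y)⁻¹ • G y))⁻¹ j k) : ℝ) : ℂ) *
          fderiv ℝ u y (Pi.single k 1)) x (Pi.single j 1)
      = ((c x ^ (-((n : ℝ) - 2) / 4) : ℝ) : ℂ) *
          (fderiv ℝ (fun z => ((c z ^ (-((n : ℝ) - 2) / 4) : ℝ) : ℂ)) x (Pi.single j 1) *
            (((Real.sqrt (G x).det * ((G x)⁻¹ j k) : ℝ) : ℂ) * fderiv ℝ u x (Pi.single k 1)))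
        + ((c x ^ (-((n : ℝ) - 2) / 4) : ℝ) : ℂ) *
          (fderiv ℝ (fun z => ((c z ^ (-((n : ℝ) - 2) / 4) : ℝ) : ℂ)) x (Pi.single j 1) *
            (((Real.sqrt (G x).det * ((G x)⁻¹ j k) : ℝ) : ℂ) * fderiv ℝ u x (Pi.single k 1)))
        + (((c x ^ (-((n : ℝ) - 2) / 4) : ℝ) : ℂ) * ((c x ^ (-((n : ℝ) - 2) / 4) : ℝ) : ℂ)) *
          fderiv ℝ (fun y => ((Real.sqrt (G y).det * ((G y)⁻¹ j k) : ℝ) : ℂ) *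
            fderiv ℝ u y (Pi.single k 1)) x (Pi.single j 1) := by
    intro j k
    have e3 : (fun y => ((Real.sqrt (((c y)⁻¹ • G y)).det * ((((c y)⁻¹ • G y))⁻¹ j k) : ℝ) : ℂ) *
          fderiv ℝ u y (Pi.single k 1))
        = fun y => ((c y ^ (-((n : ℝ) - 2) / 4) : ℝ) : ℂ) *
            (((c y ^ (-((n : ℝ) - 2) / 4) : ℝ) : ℂ) *
              (((Real.sqrt (G y).det * ((G y)⁻¹ j k) : ℝ) : ℂ) *
                fderiv ℝ u y (Pi.single k 1))) := by
      funext y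
      have hre : Real.sqrt (((c y)⁻¹ • G y)).det * ((((c y)⁻¹ • G y))⁻¹ j k)
          = c y ^ (-((n : ℝ) - 2) / 4) *
              (c y ^ (-((n : ℝ) - 2) / 4) * (Real.sqrt (G y).det * ((G y)⁻¹ j k))) := by
        rw [hinv y, hsq y, Matrix.smul_apply, smul_eq_mul]
        calc c y ^ (-((n : ℝ) - 2) / 4) * c y ^ (-((n : ℝ) - 2) / 4) * (c y)⁻¹ *
              Real.sqrt (G y).det * (c y * (G y)⁻¹ j k)
            = (c y ^ (-((n : ℝ) - 2) / 4) *
                (c y ^ (-((n : ℝ) - 2) / 4) * (Real.sqrt (G y).det * (G y)⁻¹ j k))) *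
                ((c y)⁻¹ * c y) := by ring
          _ = _ := by rw [inv_mul_cancel₀ (hcne y), mul_one]
      rw [hre]
      push_cast
      ring
    rw [e3, aux_fderiv_mul _ (dd hγcC x)
        ((dd hγcC x).fun_mul ((dd (hPcC j k) x).fun_mul (dd (hDuC k) x))),
      aux_fderiv_mul _ (dd hγcC x) ((dd (hPcC j k) x).fun_mul (dd (hDuC k) x))]
    ring
  simp only [laplaceBeltrami]
  simp only [hAterm, hDterm]
  simp only [Finset.sum_add_distrib, ← Finset.sum_mul, ← Finset.mul_sum]
  have hswap : (∑ j : Fin n, (∑ k : Fin n,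
        ((Real.sqrt (G x).det * ((G x)⁻¹ j k) : ℝ) : ℂ) *
          fderiv ℝ (fun z => ((c z ^ (-((n : ℝ) - 2) / 4) : ℝ) : ℂ)) x (Pi.single k 1)) *
        fderiv ℝ u x (Pi.single j 1))
      = ∑ j : Fin n, fderiv ℝ (fun z => ((c z ^ (-((n : ℝ) - 2) / 4) : ℝ) : ℂ)) x
          (Pi.single j 1) *
          (∑ k : Fin n, ((Real.sqrt (G x).det * ((G x)⁻¹ j k) : ℝ) : ℂ) *
            fderiv ℝ u x (Pi.single k 1)) := by
    simp only [Finset.sum_mul, Finset.mul_sum]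
    rw [Finset.sum_comm]
    refine Finset.sum_congr rfl fun j _ => Finset.sum_congr rfl fun k _ => ?_
    rw [hsymm x k j]
    ring
  rw [hswap]
  have h1 : ((Real.sqrt (G x).det : ℝ) : ℂ) ≠ 0 := Complex.ofReal_ne_zero.2 (hρpos x).ne'
  have h2 : ((c x : ℝ) : ℂ) ≠ 0 := Complex.ofReal_ne_zero.2 (hcne x)
  have h3 : ((c x ^ (-((n : ℝ) - 2) / 4) : ℝ) : ℂ) ≠ 0 :=
    Complex.ofReal_ne_zero.2 (hγpos x).ne'
  generalize (∑ j : Fin n, ∑ k : Fin n,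
      fderiv ℝ (fun y => ((Real.sqrt (G y).det * ((G y)⁻¹ j k) : ℝ) : ℂ) *
        fderiv ℝ (fun z => ((c z ^ (-((n : ℝ) - 2) / 4) : ℝ) : ℂ)) y (Pi.single k 1)) x
        (Pi.single j 1)) = SB
  generalize (∑ j : Fin n, ∑ k : Fin n,
      fderiv ℝ (fun y => ((Real.sqrt (G y).det * ((G y)⁻¹ j k) : ℝ) : ℂ) *
        fderiv ℝ u y (Pi.single k 1)) x (Pi.single j 1)) = SM
  generalize (∑ j : Fin n,
      fderiv ℝ (fun z => ((c z ^ (-((n : ℝ) - 2) / 4) : ℝ) : ℂ)) x (Pi.single j 1) *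
        (∑ k : Fin n, ((Real.sqrt (G x).det * ((G x)⁻¹ j k) : ℝ) : ℂ) *
          fderiv ℝ u x (Pi.single k 1))) = S2
  rw [hsq x, hβ]
  simp only [Complex.ofReal_mul, Complex.ofReal_inv]
  generalize hg : ((c x ^ (-((n : ℝ) - 2) / 4) : ℝ) : ℂ) = gg at h3 ⊢
  generalize hr : ((Real.sqrt (G x).det : ℝ) : ℂ) = rr at h1 ⊢
  generalize hcc : ((c x : ℝ) : ℂ) = cc at h2 ⊢
  field_simp
  ring
end
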